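/- Let τ(φ) = t²·φ_tt + (1−n)·t·φ_t + t²·Δ_x φ on {t>0} × ℝⁿ with n ≥ 1, and let H : ℝⁿ → ℂ be harmonic. Then the functions (t,x) ↦ H(x), (t,x) ↦ tⁿ·H(x), (t,x) ↦ H(x)·log(t) satisfy τ(H) = 0, τ(tⁿ·H) = 0, and τ(H·log t) = −n·H, so that H·log t is proper biharmonic whenever n ≠ 0 and H ≠ 0. -/
import Mathlib


/-- The Euclidean Laplacian in the `x`-variables. -/
noncomputable def lapE (n : ℕ) (H : (Fin n → ℝ) → ℂ) : (Fin n → ℝ) → ℂ := fun x =>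
  ∑ i, deriv (deriv (fun s => H (Function.update x i s))) (x i)

/-- The Laplace–Beltrami operator of `ℝH^{n+1}`:
`τ(φ) = t²·φ_tt + (1−n)·t·φ_t + t²·Δ_x φ`. -/
noncomputable def tauRHn (n : ℕ) (φ : ℝ → (Fin n → ℝ) → ℂ) : ℝ → (Fin n → ℝ) → ℂ :=
  fun t x =>
    (t : ℂ) ^ 2 * deriv (deriv (fun s => φ s x)) t
      + (1 - (n : ℂ)) * (t : ℂ) * deriv (fun s => φ s x) t
      + (t : ℂ) ^ 2 * lapE n (φ t) x


private lemma deriv2_const_mul (c : ℂ) (f : ℝ → ℂ) (t : ℝ) :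
    deriv (deriv (fun s => c * f s)) t = c * deriv (deriv f) t := by
  have h : deriv (fun s => c * f s) = fun s => c * deriv f s :=
    funext fun s => deriv_const_mul_field c
  rw [h, deriv_const_mul_field]

private lemma lapE_const_mul (n : ℕ) (c : ℂ) (H : (Fin n → ℝ) → ℂ) (x : Fin n → ℝ) :
    lapE n (fun x => c * H x) x = c * lapE n H x := by
  unfold lapE
  rw [Finset.mul_sum]
  exact Finset.sum_congr rfl fun i _ => deriv2_const_mul c _ _

private lemma lapE_mul_const (n : ℕ) (c : ℂ) (H : (Fin n → ℝ) → ℂ) (x : Fin n → ℝ) :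
    lapE n (fun x => H x * c) x = c * lapE n H x := by
  have : (fun x => H x * c) = fun x => c * H x := funext fun x => mul_comm _ _
  rw [this, lapE_const_mul]

/-- for harmonic `H`: `τ(H) = 0`, `τ(tⁿ·H) = 0`, `τ(H·log t) = −n·H`;
hence `H·log t` is proper biharmonic whenever `H ≠ 0`. -/
theorem stmt_16 (n : ℕ) (hn : 1 ≤ n) (H : (Fin n → ℝ) → ℂ) (hH : ∀ x, lapE n H x = 0) :
    (∀ t > (0 : ℝ), ∀ x, tauRHn n (fun _ x => H x) t x = 0) ∧
      (∀ t > (0 : ℝ), ∀ x, tauRHn n (fun t x => (t : ℂ) ^ n * H x) t x = 0) ∧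
      (∀ t > (0 : ℝ), ∀ x,
        tauRHn n (fun t x => H x * (Real.log t : ℂ)) t x = -(n : ℂ) * H x) ∧
      (H ≠ 0 →
        (∀ t > (0 : ℝ), ∀ x,
            tauRHn n (tauRHn n (fun t x => H x * (Real.log t : ℂ))) t x = 0) ∧
          ∃ t > (0 : ℝ), ∃ x, tauRHn n (fun t x => H x * (Real.log t : ℂ)) t x ≠ 0) := by
  -- derivative facts
  have hpow : ∀ (m : ℕ) (s : ℝ), HasDerivAt (fun s : ℝ => (s : ℂ) ^ m)
      ((m : ℂ) * (s : ℂ) ^ (m - 1)) s :=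
    fun m s => (hasDerivAt_pow m (s : ℂ)).comp_ofReal
  have part3 : ∀ t > (0 : ℝ), ∀ x,
      tauRHn n (fun t x => H x * (Real.log t : ℂ)) t x = -(n : ℂ) * H x := by
    intro t ht x
    have ht0 : (t : ℂ) ≠ 0 := by exact_mod_cast ne_of_gt ht
    have hlog : ∀ s : ℝ, s ≠ 0 → HasDerivAt (fun s : ℝ => ((Real.log s : ℝ) : ℂ))
        ((s : ℂ)⁻¹) s := by
      intro s hs
      have := (Real.hasDerivAt_log hs).ofReal_comp
      simpa using this
    -- first derivative at t
    have hd1 : deriv (fun s : ℝ => H x * (Real.log s : ℂ)) t = H x * (t : ℂ)⁻¹ := by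
      rw [deriv_const_mul_field, (hlog t (ne_of_gt ht)).deriv]
    -- first derivative eventually
    have hev : (fun s : ℝ => deriv (fun s : ℝ => H x * (Real.log s : ℂ)) s)
        =ᶠ[nhds t] fun s : ℝ => H x * (s : ℂ)⁻¹ := by
      filter_upwards [isOpen_Ioi.mem_nhds ht] with s hs
      rw [deriv_const_mul_field, (hlog s (ne_of_gt hs)).deriv]
    have hd2 : deriv (deriv (fun s : ℝ => H x * (Real.log s : ℂ))) t
        = H x * (-((t : ℂ) ^ 2)⁻¹) := by
      rw [hev.deriv_eq, deriv_const_mul_field, ((hasDerivAt_inv ht0).comp_ofReal).deriv]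
    have hlap : lapE n (fun x => H x * (Real.log t : ℂ)) x = 0 := by
      rw [lapE_mul_const, hH x, mul_zero]
    simp only [tauRHn, hd1, hd2, hlap, mul_zero, add_zero]
    field_simp
    ring
  refine ⟨?_, ?_, part3, ?_⟩
  · intro t ht x
    simp [tauRHn, deriv_const', hH x]
  · intro t ht x
    have ht0 : (t : ℂ) ≠ 0 := by exact_mod_cast ne_of_gt ht
    have hd1 : deriv (fun s : ℝ => (s : ℂ) ^ n * H x) t = (n : ℂ) * (t : ℂ) ^ (n - 1) * H x := by
      rw [((hpow n t).mul_const (H x)).deriv]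
    have hfun : deriv (fun s : ℝ => (s : ℂ) ^ n * H x)
        = fun s : ℝ => (n : ℂ) * (s : ℂ) ^ (n - 1) * H x :=
      funext fun s => ((hpow n s).mul_const (H x)).deriv
    have hd2 : deriv (deriv (fun s : ℝ => (s : ℂ) ^ n * H x)) t
        = (n : ℂ) * (((n - 1 : ℕ) : ℂ) * (t : ℂ) ^ (n - 1 - 1)) * H x := by
      rw [hfun, (((hpow (n - 1) t).const_mul ((n : ℂ))).mul_const (H x)).deriv]
    have hlap : lapE n (fun x => (t : ℂ) ^ n * H x) x = 0 := by
      rw [lapE_const_mul, hH x, mul_zero]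
    simp only [tauRHn, hd1, hd2, hlap, mul_zero, add_zero]
    obtain _ | _ | k := n
    · omega
    · norm_num
    · push_cast
      ring
  · intro hHne
    constructor
    · intro t ht x
      have hmem : Set.Ioi (0 : ℝ) ∈ nhds t := isOpen_Ioi.mem_nhds ht
      have h1 : (fun s : ℝ => tauRHn n (fun t x => H x * (Real.log t : ℂ)) s x)
          =ᶠ[nhds t] fun _ => -(n : ℂ) * H x := by
        filter_upwards [hmem] with s hs
        exact part3 s hs x
      have hd1 : deriv (fun s : ℝ => tauRHn n (fun t x => H x * (Real.log t : ℂ)) s x) t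
          = 0 := by
        rw [h1.deriv_eq, deriv_const]
      have hd2 : deriv (deriv (fun s : ℝ =>
          tauRHn n (fun t x => H x * (Real.log t : ℂ)) s x)) t = 0 := by
        rw [h1.deriv.deriv_eq, deriv_const', deriv_const]
      have hfun : tauRHn n (fun t x => H x * (Real.log t : ℂ)) t
          = fun x => -(n : ℂ) * H x := funext (part3 t ht)
      have hlap : lapE n (tauRHn n (fun t x => H x * (Real.log t : ℂ)) t) x = 0 := by
        rw [hfun, lapE_const_mul, hH x, mul_zero]
      simp only [tauRHn] at hd1 hd2 hlap ⊢
      rw [hd1, hd2, hlap]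
      ring
    · obtain ⟨x, hx⟩ : ∃ x, H x ≠ 0 := by
        by_contra h
        push_neg at h
        exact hHne (funext h)
      refine ⟨1, one_pos, x, ?_⟩
      rw [part3 1 one_pos x]
      have hn0 : (n : ℂ) ≠ 0 := Nat.cast_ne_zero.mpr (by omega)
      simp [hn0, hx]
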